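/- arXiv:2511.22073 — 2 statements merged into one kernel-verified Lean document; each statement's English description precedes it below -/
import Mathlib

section
/- Let R be a finite rack and n = min { k ∈ Z_{>0} : S_y^k(x) = x for all x, y ∈ R }, where S_y(x) = x ◁ y. Then the set R × Z/nZ, viewed as the disjoint union over x ∈ R of the groups {x} × Z/nZ (each isomorphic to Z/nZ with (x,i)(x,j) = (x, i+j)), equipped with the operation (x, i) ◁ (y, j) = (S_y^j(x), i), is a multiple group rack: it satisfies (i) (x,i) ◁ ((y,j)(y,k)) = ((x,i) ◁ (y,j)) ◁ (y,k) and (x,i) ◁ (y,0) = (x,i); (ii) right self-distributivity; and (iii) for any (y,j), the map a ↦ a ◁ (y,j) sends each group {x} × Z/nZ to the group {S_y^j(x)} × Z/nZ and is a group homomorphism there. -/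
/-! Right self-distributivity says that every right translation `S_z` is an endomorphism of the
rack, hence so is every `S_z^k`, and an endomorphism `g` conjugates `S_y^j` into `S_{g y}^j`;
this gives self-distributivity of `R × ZMod n`. Since `S_y^n = id`, iterates of `S_y` only
depend on the exponent modulo `n`, which makes `j ↦ S_y^j` an action of `ZMod n`. -/

theorem iterate_op_right_iterate_op_right {R : Type*} (op : R → R → R)
    (hdist : ∀ x y z, op (op x y) z = op (op x z) (op y z))
    (j k : ℕ) (x y z : R) :
    (op · z)^[k] ((op · y)^[j] x) = (op · ((op · z)^[k] y))^[j] ((op · z)^[k] x) :=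
  have hSk : Function.Semiconj₂ (op · z)^[k] op op :=
    Function.Semiconj₂.iterate (fun x y => hdist x y z) k
  Function.Semiconj.iterate_right (fun x => hSk x y) j x

theorem ZMod.iterate_val_add {R : Type*} {n : ℕ} [NeZero n] {f : R → R} {x : R}
    (hf : Function.IsPeriodicPt f n x) (j k : ZMod n) :
    f^[(j + k).val] x = f^[k.val] (f^[j.val] x) := by
  rw [ZMod.val_add, hf.iterate_mod_apply, add_comm, Function.iterate_add_apply]

theorem finite_rack_gives_mgr_general {R : Type*}
    (op : R → R → R)
    (hdist : ∀ x y z, op (op x y) z = op (op x z) (op y z))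
    (n : ℕ)
    (hn : IsLeast {k : ℕ | 0 < k ∧ ∀ x y : R, (fun a => op a y)^[k] x = x} n)
    (tri : R × ZMod n → R × ZMod n → R × ZMod n)
    (htri : ∀ (x y : R) (i j : ZMod n),
      tri (x, i) (y, j) = ((fun a => op a y)^[j.val] x, i)) :
    -- (i) right group-action property
    (∀ (x y : R) (i j k : ZMod n),
      tri (x, i) (y, j + k) = tri (tri (x, i) (y, j)) (y, k)) ∧
    (∀ (x y : R) (i : ZMod n), tri (x, i) (y, (0 : ZMod n)) = (x, i)) ∧
    -- (ii) right self-distributivity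
    (∀ p q r : R × ZMod n, tri (tri p q) r = tri (tri p r) (tri q r)) ∧
    -- (iii) right translation maps the group {x} × ZMod n onto the group
    -- {S_y^j x} × ZMod n and is a group homomorphism there
    (∀ (x y : R) (i j : ZMod n),
      (tri (x, i) (y, j)).1 = (fun a => op a y)^[j.val] x) ∧
    (∀ (x y : R) (i k j : ZMod n),
      tri (x, i + k) (y, j) = ((tri (x, i) (y, j)).1, i + k)) := by
  obtain ⟨⟨hn_pos, hperiodic⟩, -⟩ := hn
  have : NeZero n := ⟨hn_pos.ne'⟩
  refine ⟨fun x y i j k => ?_, fun x y i => ?_, fun ⟨x, i⟩ ⟨y, j⟩ ⟨z, k⟩ => ?_,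
    fun x y i j => by rw [htri], fun x y i k j => by rw [htri, htri]⟩
  · simp only [htri, ZMod.iterate_val_add (hperiodic x y)]
  · simp only [htri, ZMod.val_zero, Function.iterate_zero_apply]
  · simp only [htri]
    rw [iterate_op_right_iterate_op_right op hdist]

/-- For a finite rack `R` with `n` the least positive integer such that
`S_y^n = id` for all `y`, the set `R × ZMod n` with operation
`(x, i) ◁ (y, j) = (S_y^j x, i)` and groups `{x} × ZMod n` is a multiple
group rack. -/
theorem finite_rack_gives_mgr {R : Type*} [Fintype R]
    (op : R → R → R)
    (hbij : ∀ y, Function.Bijective (fun x => op x y))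
    (hdist : ∀ x y z, op (op x y) z = op (op x z) (op y z))
    (n : ℕ)
    (hn : IsLeast {k : ℕ | 0 < k ∧ ∀ x y : R, (fun a => op a y)^[k] x = x} n)
    (tri : R × ZMod n → R × ZMod n → R × ZMod n)
    (htri : ∀ (x y : R) (i j : ZMod n),
      tri (x, i) (y, j) = ((fun a => op a y)^[j.val] x, i)) :
    -- (i) right group-action property
    (∀ (x y : R) (i j k : ZMod n),
      tri (x, i) (y, j + k) = tri (tri (x, i) (y, j)) (y, k)) ∧
    (∀ (x y : R) (i : ZMod n), tri (x, i) (y, (0 : ZMod n)) = (x, i)) ∧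
    -- (ii) right self-distributivity
    (∀ p q r : R × ZMod n, tri (tri p q) r = tri (tri p r) (tri q r)) ∧
    -- (iii) right translation maps the group {x} × ZMod n onto the group
    -- {S_y^j x} × ZMod n and is a group homomorphism there
    (∀ (x y : R) (i j : ZMod n),
      (tri (x, i) (y, j)).1 = (fun a => op a y)^[j.val] x) ∧
    (∀ (x y : R) (i k j : ZMod n),
      tri (x, i + k) (y, j) = ((tri (x, i) (y, j)).1, i + k)) :=
  finite_rack_gives_mgr_general op hdist n hn tri htri
end

section
/- For m, n ∈ Z, define the 4 × 4 integer matrices V_m and V_n with rows (0,0,0,0), (0,0,1,0), (−1,0,4,0), (−1,0,0,4+2m) and correspondingly for n. If |4 + 2m| ≠ |4 + 2n|, then V_m and V_n are not unimodularly congruent. -/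
/-!
The adjugate of `V_k` is `-(4 + 2k)` times a matrix unit, and the adjugate of a congruence
`Pᵀ * A * P` is `adj P * adj A * adj Pᵀ`. Hence `V_n = Pᵀ * V_m * P` forces `4 + 2m ∣ 4 + 2n`;
when `P` is unimodular, `V_m = (P⁻¹)ᵀ * V_n * P⁻¹` is a congruence of the same kind, so the two
numbers divide each other and have the same absolute value.
-/

namespace Matrix

variable {n R : Type*} [Fintype n] [DecidableEq n] [CommRing R]

theorem adjugate_transpose_mul_mul_of_eq_smul {A C : Matrix n n R} {d : R}
    (hA : A.adjugate = d • C) (P : Matrix n n R) :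
    (Pᵀ * A * P).adjugate = d • (P.adjugate * C * Pᵀ.adjugate) := by
  rw [adjugate_mul_distrib, adjugate_mul_distrib, hA, Matrix.smul_mul, Matrix.mul_smul,
    Matrix.mul_assoc]

theorem eq_transpose_mul_mul_of_isUnit_det {A B P : Matrix n n R} (hP : IsUnit P.det)
    (h : B = Pᵀ * A * P) : A = (P⁻¹)ᵀ * B * P⁻¹ := by
  have hPinv : (P⁻¹)ᵀ * Pᵀ = 1 := by rw [← transpose_mul, mul_nonsing_inv P hP, transpose_one]
  calc A = (P⁻¹)ᵀ * Pᵀ * A * (P * P⁻¹) := by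
        rw [hPinv, mul_nonsing_inv P hP, Matrix.one_mul, Matrix.mul_one]
    _ = (P⁻¹)ᵀ * B * P⁻¹ := by simp only [h, Matrix.mul_assoc]

end Matrix

open Matrix

def seifertMatrix (k : ℤ) : Matrix (Fin 4) (Fin 4) ℤ :=
  !![0, 0, 0, 0; 0, 0, 1, 0; -1, 0, 4, 0; -1, 0, 0, 4 + 2 * k]

theorem adjugate_seifertMatrix (k : ℤ) :
    (seifertMatrix k).adjugate = (4 + 2 * k) • single 1 0 (-1) := by
  ext i j
  fin_cases i <;> fin_cases j <;>
    simp [seifertMatrix, adjugate_fin_succ_eq_det_submatrix, det_fin_three, Fin.succAbove,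
      single]

theorem dvd_of_seifertMatrix_eq_transpose_mul_mul {m n : ℤ} {P : Matrix (Fin 4) (Fin 4) ℤ}
    (h : seifertMatrix n = Pᵀ * seifertMatrix m * P) : 4 + 2 * m ∣ 4 + 2 * n := by
  have h10 := congrFun₂ (congrArg adjugate h) 1 0
  rw [adjugate_transpose_mul_mul_of_eq_smul (adjugate_seifertMatrix m),
    adjugate_seifertMatrix] at h10
  simp only [Matrix.smul_apply, single_apply_same, smul_eq_mul, mul_neg_one] at h10
  exact dvd_neg.1 ⟨_, h10⟩

/-- If `|4 + 2m| ≠ |4 + 2n|`, the Seifert matrices `V_m` and `V_n` are not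
unimodularly congruent. -/
theorem Vm_Vn_not_unimodularly_congruent (m n : ℤ)
    (h : |4 + 2 * m| ≠ |4 + 2 * n|) :
    ¬ ∃ P : Matrix (Fin 4) (Fin 4) ℤ,
      (P.det = 1 ∨ P.det = -1) ∧
      (!![0, 0, 0, 0; 0, 0, 1, 0; -1, 0, 4, 0; -1, 0, 0, 4 + 2 * n] :
          Matrix (Fin 4) (Fin 4) ℤ) =
        P.transpose *
          (!![0, 0, 0, 0; 0, 0, 1, 0; -1, 0, 4, 0; -1, 0, 0, 4 + 2 * m] :
            Matrix (Fin 4) (Fin 4) ℤ) * P := by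
  rintro ⟨P, hdet, hcongr⟩
  have hmn : 4 + 2 * m ∣ 4 + 2 * n := dvd_of_seifertMatrix_eq_transpose_mul_mul hcongr
  have hnm : 4 + 2 * n ∣ 4 + 2 * m := dvd_of_seifertMatrix_eq_transpose_mul_mul
    (eq_transpose_mul_mul_of_isUnit_det (Int.isUnit_iff.2 hdet) hcongr)
  exact h (abs_eq_abs.2 (Int.associated_iff.1 (associated_of_dvd_dvd hmn hnm)))
end
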